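/- arXiv:1808.04732 — 2 statements merged into one kernel-verified Lean document; each statement's English description precedes it below -/
import Mathlib

section
/- Let T and S be perfect trees and let s be an element of T ∧ S. Then (T ∧ S)_s = T_s ∧ S_s. -/
/-- A tree: a set of finite binary strings closed under initial segments (prefixes). -/
def IsTree (T : Set (List Bool)) : Prop :=
  ∀ ⦃s t : List Bool⦄, s <+: t → t ∈ T → s ∈ T

/-- A node `t` splits in a set `A` of strings if both one-step extensions belong to `A`. -/
def Splits (A : Set (List Bool)) (t : List Bool) : Prop :=
  t ++ [false] ∈ A ∧ t ++ [true] ∈ A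

/-- A perfect tree: a nonempty tree each of whose elements has a splitting extension in it. -/
def IsPerfect (T : Set (List Bool)) : Prop :=
  T.Nonempty ∧ IsTree T ∧ ∀ s ∈ T, ∃ t ∈ T, s <+: t ∧ Splits T t

/-- The cone `C_s`: all strings comparable with `s`. -/
def Cone (s : List Bool) : Set (List Bool) :=
  {t | s <+: t ∨ t <+: s}

/-- `T_s`: the elements of `T` comparable with `s`. -/
def restrictTo (T : Set (List Bool)) (s : List Bool) : Set (List Bool) :=
  {t ∈ T | s <+: t ∨ t <+: s}

/-- The meet `A ∧ B`: the union of all perfect trees contained in `A ∩ B`. -/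
def meet (A B : Set (List Bool)) : Set (List Bool) :=
  ⋃₀ {U | IsPerfect U ∧ U ⊆ A ∩ B}

/-
The meet `T ∧ S` is a union of perfect trees, hence itself a perfect tree, and so is its
restriction `(T ∧ S)_s` once `s ∈ T ∧ S`; being contained in `T_s ∩ S_s`, it lies in `T_s ∧ S_s`.
Conversely a perfect tree inside `T_s ∩ S_s` lies inside `T ∩ S`, hence inside `T ∧ S`, and all
its elements are comparable with `s`.
-/

open Set

theorem restrictTo_eq_inter_cone (T : Set (List Bool)) (s : List Bool) :
    restrictTo T s = T ∩ Cone s :=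
  rfl

theorem isTree_cone (s : List Bool) : IsTree (Cone s) := by
  rintro a b hab (hsb | hbs)
  · exact (List.prefix_or_prefix_of_prefix hab hsb).symm
  · exact Or.inr (hab.trans hbs)

theorem IsTree.inter {A B : Set (List Bool)} (hA : IsTree A) (hB : IsTree B) :
    IsTree (A ∩ B) :=
  fun _ _ hab hb => ⟨hA hab hb.1, hB hab hb.2⟩

theorem IsTree.sUnion {𝒰 : Set (Set (List Bool))} (h𝒰 : ∀ U ∈ 𝒰, IsTree U) :
    IsTree (⋃₀ 𝒰) := by
  rintro a b hab ⟨U, hU, hb⟩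
  exact ⟨U, hU, h𝒰 U hU hab hb⟩

theorem Splits.mono {A B : Set (List Bool)} {t : List Bool} (h : Splits A t) (hAB : A ⊆ B) :
    Splits B t :=
  ⟨hAB h.1, hAB h.2⟩

theorem IsPerfect.sUnion {𝒰 : Set (Set (List Bool))} (h𝒰 : ∀ U ∈ 𝒰, IsPerfect U)
    (hne : (⋃₀ 𝒰).Nonempty) : IsPerfect (⋃₀ 𝒰) := by
  refine ⟨hne, IsTree.sUnion fun U hU => (h𝒰 U hU).2.1, ?_⟩
  rintro a ⟨U, hU, ha⟩
  obtain ⟨t, ht, hat, hsplit⟩ := (h𝒰 U hU).2.2 a ha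
  exact ⟨t, ⟨U, hU, ht⟩, hat, hsplit.mono (subset_sUnion_of_mem hU)⟩

theorem IsPerfect.inter_cone {T : Set (List Bool)} (hT : IsPerfect T) {s : List Bool}
    (hs : s ∈ T) : IsPerfect (T ∩ Cone s) := by
  obtain ⟨-, hTree, hsplit⟩ := hT
  refine ⟨⟨s, hs, Or.inl (List.prefix_refl s)⟩, hTree.inter (isTree_cone s), ?_⟩
  rintro a ⟨ha, has⟩
  -- split above the longer of `a` and `s`, which lies in `T` and extends both
  obtain ⟨c, hc, hac, hsc⟩ : ∃ c ∈ T, a <+: c ∧ s <+: c := by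
    rcases has with hsa | has
    · exact ⟨a, ha, List.prefix_refl a, hsa⟩
    · exact ⟨s, hs, has, List.prefix_refl s⟩
  obtain ⟨t, ht, hct, ⟨hf, htr⟩⟩ := hsplit c hc
  have hst : s <+: t := hsc.trans hct
  exact ⟨t, ⟨ht, Or.inl hst⟩, hac.trans hct,
    ⟨hf, Or.inl (hst.trans (t.prefix_append _))⟩, ⟨htr, Or.inl (hst.trans (t.prefix_append _))⟩⟩

theorem meet_subset_inter (A B : Set (List Bool)) : meet A B ⊆ A ∩ B :=
  sUnion_subset fun _ hU => hU.2

theorem subset_meet {A B U : Set (List Bool)} (hU : IsPerfect U) (hUAB : U ⊆ A ∩ B) :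
    U ⊆ meet A B :=
  subset_sUnion_of_mem ⟨hU, hUAB⟩

theorem meet_mono {A A' B B' : Set (List Bool)} (hA : A ⊆ A') (hB : B ⊆ B') :
    meet A B ⊆ meet A' B' :=
  sUnion_mono fun _ hU => ⟨hU.1, hU.2.trans (inter_subset_inter hA hB)⟩

theorem isPerfect_meet {A B : Set (List Bool)} (h : (meet A B).Nonempty) :
    IsPerfect (meet A B) :=
  IsPerfect.sUnion (fun _ hU => hU.1) h

theorem restrict_meet_general (T S : Set (List Bool))
    (s : List Bool) (hs : s ∈ meet T S) :
    restrictTo (meet T S) s = meet (restrictTo T s) (restrictTo S s) := by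
  simp only [restrictTo_eq_inter_cone]
  refine Subset.antisymm ?_ ?_
  · refine subset_meet ((isPerfect_meet ⟨s, hs⟩).inter_cone hs) ?_
    rw [← inter_inter_distrib_right]
    exact inter_subset_inter_left _ (meet_subset_inter T S)
  · exact subset_inter (meet_mono inter_subset_left inter_subset_left)
      ((meet_subset_inter _ _).trans (inter_subset_left.trans inter_subset_right))

/-- `(T ∧ S)_s = T_s ∧ S_s` for `s ∈ T ∧ S`. -/
theorem restrict_meet (T S : Set (List Bool))
    (hT : IsPerfect T) (hS : IsPerfect S)
    (s : List Bool) (hs : s ∈ meet T S) :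
    restrictTo (meet T S) s = meet (restrictTo T s) (restrictTo S s) :=
  restrict_meet_general T S s hs
end

section
/- Let P be a perfect poset, let (T, n) ∈ Q(P), and suppose that for every node t of T of length n we are given a nonempty finite set 𝒳_t ⊆ P such that S ⊆ T_t for every S ∈ 𝒳_t. Then there is a condition (T̄, n̄) ∈ Q(P) with (T̄, n̄) ≤ (T, n) such that: (a) for every node t of T of length n and every S ∈ 𝒳_t, there is a node s of T̄ of length n̄ extending t with T̄_s ⊆ S; and (b) for every node s of T̄ of length n̄, there exist a node t of T of length n that is an initial segment of s and some S ∈ 𝒳_t with T̄_s ⊆ S. -/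
/-- A perfect poset: a collection of perfect trees containing all cones and
closed under unions and (nonempty) meets. -/
def PerfectPoset (P : Set (Set (List Bool))) : Prop :=
  (∀ T ∈ P, IsPerfect T) ∧
  (∀ s : List Bool, Cone s ∈ P) ∧
  (∀ T ∈ P, ∀ S ∈ P, T ∪ S ∈ P) ∧
  (∀ T ∈ P, ∀ S ∈ P, meet T S ≠ ∅ → meet T S ∈ P)

/-- `T` and `S` are compatible in `P` if some `U ∈ P` is contained in both. -/
def CompatIn (P : Set (Set (List Bool))) (T S : Set (List Bool)) : Prop :=
  ∃ U ∈ P, U ⊆ T ∧ U ⊆ S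

/-- The ordering of the fusion poset `Q(P)`: `(T₂, n₂) ≤ (T₁, n₁)` iff `T₂ ⊆ T₁`,
`n₂ ≥ n₁`, and `T₂` and `T₁` have exactly the same nodes of length `n₁`. -/
def QLe (q p : Set (List Bool) × ℕ) : Prop :=
  q.1 ⊆ p.1 ∧ p.2 ≤ q.2 ∧ {t ∈ q.1 | t.length = p.2} = {t ∈ p.1 | t.length = p.2}

/-- The set `D_k`: conditions `(T, n)` with `n ≥ k` such that every node of `T` of
length `k` has an extension in `T` of length `< n` splitting in `T`. -/
def Dk (k : ℕ) (p : Set (List Bool) × ℕ) : Prop :=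
  k ≤ p.2 ∧ ∀ t ∈ p.1, t.length = k →
    ∃ u ∈ p.1, t <+: u ∧ u.length < p.2 ∧ Splits p.1 u

/-!
Below each node `t` of `T` of length `n` and for each `S ∈ 𝒳_t` pick a splitting node
`σ(t, S) ∈ S` extending `t`, all these nodes pairwise incomparable; this is possible by
induction, because when a new tree's node `u` is chosen longer than all previous picks, every
previous pick that lies below `u` can be moved, through the branch of its splitting that avoids
`u`, to a splitting node incomparable with `u`. Then `T̄ = ⋃ S ∩ C_{σ(t, S)}` and any `n̄ ≥ n`
bounding the lengths of the `σ(t, S)` work: above level `n̄` the cones are disjoint, so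
`T̄_s ⊆ S` whenever `s` lies in the cone of `σ(t, S)`.
-/

namespace List

variable {α : Type*}

def Comparable (s t : List α) : Prop :=
  s <+: t ∨ t <+: s

theorem comparable_of_prefix_of_prefix {s t u : List α} (hs : s <+: u) (ht : t <+: u) :
    Comparable s t :=
  prefix_or_prefix_of_prefix hs ht

theorem Comparable.of_prefix {s s' t t' : List α} (h : Comparable s' t') (hs : s <+: s')
    (ht : t <+: t') : Comparable s t := by
  rcases h with h | h
  · exact comparable_of_prefix_of_prefix (hs.trans h) ht
  · exact comparable_of_prefix_of_prefix hs (ht.trans h)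

theorem Comparable.prefix_of_length_le {s t : List α} (h : Comparable s t)
    (hlen : s.length ≤ t.length) : s <+: t := by
  rcases h with h | h
  · exact h
  · rw [h.eq_of_length (le_antisymm h.length_le hlen)]

theorem not_comparable_append_singleton {s u : List α}
    (hlt : s.length < u.length) {a : α} (ha : a ≠ u[s.length]) :
    ¬Comparable (s ++ [a]) u := by
  intro h
  have hpre := h.prefix_of_length_le (by simpa using hlt)
  exact ha (by simpa using hpre.getElem (i := s.length) (by simp))

end List

open List

theorem Splits.append_singleton_mem {S : Set (List Bool)} {v : List Bool} (h : Splits S v) :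
    ∀ b, v ++ [b] ∈ S
  | false => h.1
  | true => h.2

namespace IsPerfect

variable {S : Set (List Bool)}

theorem nil_mem (hS : IsPerfect S) : [] ∈ S := by
  obtain ⟨x, hx⟩ := hS.1
  exact hS.2.1 nil_prefix hx

theorem exists_extension_length_ge (hS : IsPerfect S) {s : List Bool} (hs : s ∈ S) (L : ℕ) :
    ∃ u ∈ S, s <+: u ∧ L ≤ u.length := by
  induction L with
  | zero => exact ⟨s, hs, prefix_rfl, Nat.zero_le _⟩
  | succ L ih =>
    obtain ⟨u, hu, hsu, hLu⟩ := ih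
    obtain ⟨w, -, huw, hw⟩ := hS.2.2 u hu
    refine ⟨w ++ [true], hw.2, hsu.trans (huw.trans (prefix_append w _)), ?_⟩
    simpa using hLu.trans huw.length_le

theorem exists_extension_length_eq (hS : IsPerfect S) {s : List Bool} (hs : s ∈ S) {L : ℕ}
    (hL : s.length ≤ L) : ∃ u ∈ S, s <+: u ∧ u.length = L := by
  obtain ⟨w, hw, hsw, hLw⟩ := hS.exists_extension_length_ge hs L
  exact ⟨w.take L, hS.2.1 (take_prefix L w) hw, prefix_take_iff.2 ⟨hsw, hL⟩, by simpa⟩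

theorem exists_splits_extension (hS : IsPerfect S) {s : List Bool} (hs : s ∈ S) (L : ℕ) :
    ∃ u ∈ S, s <+: u ∧ Splits S u ∧ L ≤ u.length := by
  obtain ⟨w, hw, hsw, hLw⟩ := hS.exists_extension_length_ge hs L
  obtain ⟨u, hu, hwu, hsplit⟩ := hS.2.2 w hw
  exact ⟨u, hu, hsw.trans hwu, hsplit, hLw.trans hwu.length_le⟩

theorem mem_of_subset_cone (hS : IsPerfect S) {t : List Bool} (hSt : S ⊆ Cone t) : t ∈ S := by
  obtain ⟨u, hu, -, htu⟩ := hS.exists_extension_length_ge hS.nil_mem t.length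
  exact hS.2.1 (Comparable.prefix_of_length_le (hSt hu) htu) hu

theorem exists_splits_extension_not_comparable (hS : IsPerfect S) {v : List Bool}
    (hv : v ∈ S) (hsplit : Splits S v) {u : List Bool} (hlt : v.length < u.length) :
    ∃ w ∈ S, v <+: w ∧ Splits S w ∧ ¬Comparable w u := by
  by_cases hvu : v <+: u
  · have hbranch := not_comparable_append_singleton hlt (a := !u[v.length])
      (Bool.not_ne_self _)
    obtain ⟨w, hw, hbw, hwsplit⟩ := hS.2.2 _ (hsplit.append_singleton_mem (!u[v.length]))
    exact ⟨w, hw, (prefix_append _ _).trans hbw, hwsplit,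
      fun h => hbranch (h.of_prefix hbw prefix_rfl)⟩
  · exact ⟨v, hv, prefix_rfl, hsplit, fun h => hvu (h.prefix_of_length_le hlt.le)⟩

theorem inter_cone_s13 (hS : IsPerfect S) {s : List Bool} (hs : s ∈ S) :
    IsPerfect (S ∩ Cone s) := by
  refine ⟨⟨s, hs, Or.inl prefix_rfl⟩, fun a b hab hb => ⟨hS.2.1 hab hb.1, ?_⟩, ?_⟩
  · exact Comparable.of_prefix hb.2 prefix_rfl hab
  · rintro x ⟨hx, hsx | hxs⟩
    · obtain ⟨u, hu, hxu, hsplit⟩ := hS.2.2 x hx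
      have hsu := hsx.trans hxu
      exact ⟨u, ⟨hu, Or.inl hsu⟩, hxu, ⟨hsplit.1, Or.inl (hsu.trans (prefix_append _ _))⟩,
        ⟨hsplit.2, Or.inl (hsu.trans (prefix_append _ _))⟩⟩
    · obtain ⟨u, hu, hsu, hsplit⟩ := hS.2.2 s hs
      exact ⟨u, ⟨hu, Or.inl hsu⟩, hxs.trans hsu,
        ⟨hsplit.1, Or.inl (hsu.trans (prefix_append _ _))⟩,
        ⟨hsplit.2, Or.inl (hsu.trans (prefix_append _ _))⟩⟩

end IsPerfect

theorem meet_eq_inter {A B : Set (List Bool)} (h : IsPerfect (A ∩ B)) : meet A B = A ∩ B :=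
  (Set.sUnion_subset fun _ hU => hU.2).antisymm fun _ hx => ⟨A ∩ B, ⟨h, le_rfl⟩, hx⟩

namespace PerfectPoset

variable {P : Set (Set (List Bool))}

theorem inter_cone_mem (hP : PerfectPoset P) {S : Set (List Bool)} (hSP : S ∈ P)
    {s : List Bool} (hs : s ∈ S) : S ∩ Cone s ∈ P := by
  have hmeet := meet_eq_inter ((hP.1 S hSP).inter_cone_s13 hs)
  rw [← hmeet]
  exact hP.2.2.2 S hSP _ (hP.2.1 s) (hmeet ▸ Set.nonempty_iff_ne_empty.1 ⟨s, hs, Or.inl prefix_rfl⟩)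

theorem biUnion_mem (hP : PerfectPoset P) {ι : Type*} {I : Set ι} (hI : I.Finite)
    (hne : I.Nonempty) {f : ι → Set (List Bool)} (hf : ∀ i ∈ I, f i ∈ P) :
    (⋃ i ∈ I, f i) ∈ P := by
  induction I, hI using Set.Finite.induction_on with
  | empty => exact absurd hne Set.not_nonempty_empty
  | @insert a J _ _ ih =>
    rw [Set.biUnion_insert]
    rcases J.eq_empty_or_nonempty with rfl | hJ
    · simpa using hf a (Set.mem_insert a _)
    · exact hP.2.2.1 _ (hf a (Set.mem_insert a _)) _
        (ih hJ fun i hi => hf i (Set.mem_insert_of_mem a hi))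

end PerfectPoset

theorem exists_pairwise_not_comparable_splits {ι : Type*} {I : Set ι} (hI : I.Finite)
    {S : ι → Set (List Bool)} (hS : ∀ i ∈ I, IsPerfect (S i)) {r : ι → List Bool} (hr : ∀ i ∈ I, r i ∈ S i) :
    ∃ σ : ι → List Bool, (∀ i ∈ I, σ i ∈ S i ∧ r i <+: σ i ∧ Splits (S i) (σ i)) ∧
      I.Pairwise fun i j => ¬Comparable (σ i) (σ j) := by
  classical
  induction I, hI using Set.Finite.induction_on with
  | empty => exact ⟨r, by simp, Set.pairwise_empty _⟩
  | @insert a J haJ hJ ih =>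
    obtain ⟨σ, hσ, hpair⟩ := ih (fun i hi => hS i (.inr hi)) (fun i hi => hr i (.inr hi))
    obtain ⟨M, hM⟩ := (hJ.image fun i => (σ i).length).bddAbove
    obtain ⟨u, huS, hru, husplit, hMu⟩ :=
      (hS a (.inl rfl)).exists_splits_extension (hr a (.inl rfl)) (M + 1)
    have hmove : ∀ i, ∃ w, i ∈ J →
        w ∈ S i ∧ σ i <+: w ∧ Splits (S i) w ∧ ¬Comparable w u := by
      intro i
      by_cases hi : i ∈ J
      · obtain ⟨hσS, -, hσsplit⟩ := hσ i hi
        have hlt : (σ i).length < u.length := by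
          have := hM (Set.mem_image_of_mem _ hi)
          omega
        obtain ⟨w, hw⟩ := (hS i (.inr hi)).exists_splits_extension_not_comparable hσS hσsplit hlt
        exact ⟨w, fun _ => hw⟩
      · exact ⟨[], fun h => absurd h hi⟩
    choose w hw using hmove
    have hne : ∀ i ∈ J, i ≠ a := fun i hi h => haJ (h ▸ hi)
    refine ⟨Function.update w a u, ?_, ?_⟩
    · rintro i (rfl | hi)
      · simpa using ⟨huS, hru, husplit⟩
      · obtain ⟨hwS, hσw, hwsplit, -⟩ := hw i hi
        rw [Function.update_of_ne (hne i hi)]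
        exact ⟨hwS, (hσ i hi).2.1.trans hσw, hwsplit⟩
    · refine Set.pairwise_insert.2 ⟨fun i hi j hj hij => ?_, fun j hj _ => ?_⟩
      · simp only [Function.update_of_ne (hne i hi), Function.update_of_ne (hne j hj)]
        exact fun h => hpair hi hj hij (h.of_prefix (hw i hi).2.1 (hw j hj).2.1)
      · simp only [Function.update_self, Function.update_of_ne (hne j hj)]
        have hwu := (hw j hj).2.2.2
        exact ⟨fun h => hwu (Or.symm h), hwu⟩

section Capture

variable {ι : Type*} {I : Set ι} {S : ι → Set (List Bool)} {σ : ι → List Bool} {m : ℕ}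

theorem restrictTo_biUnion_inter_cone_subset (hS : ∀ i ∈ I, IsTree (S i))
    (hpair : I.Pairwise fun i j => ¬Comparable (σ i) (σ j))
    (hm : ∀ i ∈ I, (σ i).length ≤ m) {i : ι} (hi : i ∈ I) {s : List Bool} (hs : s ∈ S i)
    (hσs : σ i <+: s) (hms : m ≤ s.length) :
    restrictTo (⋃ j ∈ I, S j ∩ Cone (σ j)) s ⊆ S i := by
  rintro x ⟨hx, hsx | hxs⟩
  · obtain ⟨j, hj, hxS, hxσ⟩ := Set.mem_iUnion₂.1 hx
    have hσx : σ j <+: x :=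
      Comparable.prefix_of_length_le hxσ ((hm j hj).trans (hms.trans hsx.length_le))
    obtain rfl : i = j :=
      hpair.eq hi hj (not_not.2 (comparable_of_prefix_of_prefix (hσs.trans hsx) hσx))
    exact hxS
  · exact hS i hi hxs hs

theorem exists_of_mem_biUnion_inter_cone (hS : ∀ i ∈ I, IsTree (S i))
    (hpair : I.Pairwise fun i j => ¬Comparable (σ i) (σ j))
    (hm : ∀ i ∈ I, (σ i).length ≤ m) {s : List Bool} (hs : s ∈ ⋃ j ∈ I, S j ∩ Cone (σ j))
    (hms : m ≤ s.length) :
    ∃ i ∈ I, σ i <+: s ∧ restrictTo (⋃ j ∈ I, S j ∩ Cone (σ j)) s ⊆ S i := by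
  obtain ⟨i, hi, hsS, hsσ⟩ := Set.mem_iUnion₂.1 hs
  have hσs : σ i <+: s := Comparable.prefix_of_length_le hsσ ((hm i hi).trans hms)
  exact ⟨i, hi, hσs, restrictTo_biUnion_inter_cone_subset hS hpair hm hi hsS hσs hms⟩

theorem exists_mem_biUnion_inter_cone (hS : ∀ i ∈ I, IsPerfect (S i))
    (hpair : I.Pairwise fun i j => ¬Comparable (σ i) (σ j))
    (hm : ∀ i ∈ I, (σ i).length ≤ m) {i : ι} (hi : i ∈ I) (hσ : σ i ∈ S i) {L : ℕ}
    (hL : m ≤ L) :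
    ∃ s ∈ ⋃ j ∈ I, S j ∩ Cone (σ j), s.length = L ∧ σ i <+: s ∧
      restrictTo (⋃ j ∈ I, S j ∩ Cone (σ j)) s ⊆ S i := by
  obtain ⟨s, hs, hσs, rfl⟩ := (hS i hi).exists_extension_length_eq hσ ((hm i hi).trans hL)
  exact ⟨s, Set.mem_biUnion hi ⟨hs, Or.inl hσs⟩, rfl, hσs,
    restrictTo_biUnion_inter_cone_subset (fun j hj => (hS j hj).2.1) hpair hm hi hs hσs hL⟩

end Capture

theorem PerfectPoset.exists_capture {P : Set (Set (List Bool))} (hP : PerfectPoset P)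
    {ι : Type*} {I : Set ι} (hI : I.Finite) (hne : I.Nonempty) {S : ι → Set (List Bool)}
    (hSP : ∀ i ∈ I, S i ∈ P) {r : ι → List Bool} (hr : ∀ i ∈ I, r i ∈ S i) (n : ℕ) :
    ∃ U ∈ P, ∃ m ≥ n, U ⊆ ⋃ i ∈ I, S i ∧ (∀ i ∈ I, r i ∈ U) ∧
      (∀ i ∈ I, ∃ s ∈ U, s.length = m ∧ r i <+: s ∧ restrictTo U s ⊆ S i) ∧
      (∀ s ∈ U, s.length = m → ∃ i ∈ I, r i <+: s ∧ restrictTo U s ⊆ S i) := by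
  have hS : ∀ i ∈ I, IsPerfect (S i) := fun i hi => hP.1 _ (hSP i hi)
  obtain ⟨σ, hσ, hpair⟩ := exists_pairwise_not_comparable_splits hI hS hr
  obtain ⟨M, hM⟩ := (hI.image fun i => (σ i).length).bddAbove
  have hm : ∀ i ∈ I, (σ i).length ≤ max n M := fun i hi =>
    le_max_of_le_right (hM (Set.mem_image_of_mem _ hi))
  refine ⟨⋃ i ∈ I, S i ∩ Cone (σ i),
    hP.biUnion_mem hI hne fun i hi => hP.inter_cone_mem (hSP i hi) (hσ i hi).1,
    max n M, le_max_left n M, Set.biUnion_mono subset_rfl fun _ _ => Set.inter_subset_left,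
    fun i hi => Set.mem_biUnion hi ⟨hr i hi, Or.inr (hσ i hi).2.1⟩, fun i hi => ?_,
    fun s hs hsm => ?_⟩
  · obtain ⟨s, hs, hsm, hσs, hsS⟩ :=
      exists_mem_biUnion_inter_cone hS hpair hm hi (hσ i hi).1 le_rfl
    exact ⟨s, hs, hsm, (hσ i hi).2.1.trans hσs, hsS⟩
  · obtain ⟨i, hi, hσs, hsS⟩ :=
      exists_of_mem_biUnion_inter_cone (fun i hi => (hS i hi).2.1) hpair hm hs hsm.ge
    exact ⟨i, hi, (hσ i hi).2.1.trans hσs, hsS⟩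

theorem Set.Finite.setOf_fst_mem_snd_mem {α β : Type*} {A : Set α} (hA : A.Finite)
    {X : α → Set β} (hX : ∀ a ∈ A, (X a).Finite) :
    {p : α × β | p.1 ∈ A ∧ p.2 ∈ X p.1}.Finite := by
  refine (hA.biUnion fun a ha => (hX a ha).image (Prod.mk a)).subset ?_
  rintro ⟨a, b⟩ ⟨ha, hb⟩
  exact Set.mem_biUnion ha ⟨b, hb, rfl⟩

/-- given finitely many refinements below each node of `T` of length `n`,
one can find a single `(T̄, n̄) ≤ (T, n)` in `Q(P)` capturing all of them. -/
theorem fusion_capture_finite_refinements (P : Set (Set (List Bool)))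
    (hP : PerfectPoset P) (T : Set (List Bool)) (hT : T ∈ P) (n : ℕ)
    (X : List Bool → Set (Set (List Bool)))
    (hX : ∀ t ∈ T, t.length = n →
      (X t).Finite ∧ (X t).Nonempty ∧ X t ⊆ P ∧ ∀ S ∈ X t, S ⊆ restrictTo T t) :
    ∃ Tbar ∈ P, ∃ nbar : ℕ, QLe (Tbar, nbar) (T, n) ∧
      (∀ t ∈ T, t.length = n → ∀ S ∈ X t,
        ∃ s ∈ Tbar, s.length = nbar ∧ t <+: s ∧ restrictTo Tbar s ⊆ S) ∧
      (∀ s ∈ Tbar, s.length = nbar →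
        ∃ t ∈ T, t.length = n ∧ t <+: s ∧ ∃ S ∈ X t, restrictTo Tbar s ⊆ S) := by
  set I := {p : List Bool × Set (List Bool) | p.1 ∈ {t ∈ T | t.length = n} ∧ p.2 ∈ X p.1}
  have hI : I.Finite := Set.Finite.setOf_fst_mem_snd_mem
    ((List.finite_length_eq Bool n).inter_of_right T) fun t ht => (hX t ht.1 ht.2).1
  have hIne : I.Nonempty := by
    have hTperf := hP.1 T hT
    obtain ⟨t, ht, -, htn⟩ := hTperf.exists_extension_length_eq hTperf.nil_mem (Nat.zero_le n)
    obtain ⟨S, hS⟩ := (hX t ht htn).2.1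
    exact ⟨(t, S), ⟨ht, htn⟩, hS⟩
  have hsub : ∀ p ∈ I, p.2 ⊆ restrictTo T p.1 := fun p hp => (hX _ hp.1.1 hp.1.2).2.2.2 _ hp.2
  have hroot : ∀ p ∈ I, p.1 ∈ p.2 := fun p hp =>
    (hP.1 _ ((hX _ hp.1.1 hp.1.2).2.2.1 hp.2)).mem_of_subset_cone fun _ hx => (hsub p hp hx).2
  obtain ⟨U, hUP, m, hnm, hUI, hrU, hcapture, hcover⟩ := hP.exists_capture hI hIne
    (fun p hp => (hX _ hp.1.1 hp.1.2).2.2.1 hp.2) hroot n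
  have hUT : U ⊆ T := hUI.trans (Set.iUnion₂_subset fun p hp x hx => (hsub p hp hx).1)
  refine ⟨U, hUP, m, ⟨hUT, hnm, ?_⟩, fun t ht htn S hS => hcapture (t, S) ⟨⟨ht, htn⟩, hS⟩,
    fun s hs hsm => ?_⟩
  · refine Set.ext fun t => ⟨fun h => ⟨hUT h.1, h.2⟩, fun h => ⟨?_, h.2⟩⟩
    obtain ⟨S, hS⟩ := (hX t h.1 h.2).2.1
    exact hrU (t, S) ⟨h, hS⟩
  · obtain ⟨⟨t, S⟩, ⟨htT, hS⟩, hts, hsS⟩ := hcover s hs hsm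
    exact ⟨t, htT.1, htT.2, hts, S, hS, hsS⟩
end
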